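/- arXiv:1807.02479 — 5 statements merged into one kernel-verified Lean document; each statement's English description precedes it below -/
import Mathlib

section
/- For every (x,y,θ) ∈ ℝ²×ℝ, the L² inner product of the Gabor filter ψ_{x,y,θ} with the mother filter ψ₀ = ψ_{0,0,0} equals ⟨ψ_{x,y,θ}, ψ_{0,0,0}⟩_{L²} = σ²π · exp( −x²/(4σ²) − y²/(4σ²) − 2σ²π²(1 − cos θ)/λ² ) · exp( −iπ·( x(1 + cos θ) + y sin θ )/λ ). -/
open MeasureTheory

/-- Rotation of the plane by angle `θ`. -/
noncomputable def rot (θ : ℝ) (w : ℝ × ℝ) : ℝ × ℝ :=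
  (w.1 * Real.cos θ - w.2 * Real.sin θ, w.1 * Real.sin θ + w.2 * Real.cos θ)

/-- The mother Gabor filter `ψ₀(u,v) = exp(2πiu/λ)·exp(−(u²+v²)/(2σ²))`. -/
noncomputable def gaborMother (lam sg : ℝ) (w : ℝ × ℝ) : ℂ :=
  Complex.exp (2 * (Real.pi : ℂ) * Complex.I * (w.1 : ℂ) / (lam : ℂ)) *
    Complex.exp (-(((w.1 ^ 2 + w.2 ^ 2) / (2 * sg ^ 2) : ℝ) : ℂ))

/-- The Gabor filter `ψ_{x,y,θ}(u,v) = ψ₀(R_{−θ}((u,v)−(x,y)))` for `p = (x,y,θ)`. -/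
noncomputable def gabor (lam sg : ℝ) (p : ℝ × ℝ × ℝ) (w : ℝ × ℝ) : ℂ :=
  gaborMother lam sg (rot (-p.2.2) (w - (p.1, p.2.1)))

/-!
The product `ψ_{x,y,θ} · conj ψ₀` is the exponential of a quadratic polynomial in `(u, v)`
whose quadratic part is `−(u² + v²)/σ²` (the rotation preserves `u² + v²`). The inner product
is therefore a two-dimensional Gaussian integral, which splits by Fubini into two
one-dimensional ones; completing the square gives the stated closed form.
-/

open Complex Real ComplexConjugate

theorem integral_cexp_quadratic_prod {b : ℂ} (hb : b.re < 0) (c₁ c₂ d : ℂ) :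
    ∫ w : ℝ × ℝ, cexp (b * (w.1 ^ 2 + w.2 ^ 2) + c₁ * w.1 + c₂ * w.2 + d) =
      π / -b * cexp (d - (c₁ ^ 2 + c₂ ^ 2) / (4 * b)) := by
  have hb₀ : b ≠ 0 := by rintro rfl; simp at hb
  have h_split (w : ℝ × ℝ) : cexp (b * (w.1 ^ 2 + w.2 ^ 2) + c₁ * w.1 + c₂ * w.2 + d) =
      cexp (b * w.1 ^ 2 + c₁ * w.1 + d) * cexp (b * w.2 ^ 2 + c₂ * w.2 + 0) := by
    rw [← Complex.exp_add]; ring_nf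
  have h_sqrt : (π / -b : ℂ) ^ (1 / 2 : ℂ) * (π / -b) ^ (1 / 2 : ℂ) = π / -b := by
    rw [← cpow_add _ _ (by simp [hb₀, Real.pi_ne_zero])]; norm_num
  simp_rw [h_split]
  rw [Measure.volume_eq_prod, integral_prod_mul (fun u : ℝ => cexp (b * u ^ 2 + c₁ * u + d))
    (fun v : ℝ => cexp (b * v ^ 2 + c₂ * v + 0)),
    integral_cexp_quadratic hb, integral_cexp_quadratic hb]
  calc _ = (π / -b : ℂ) ^ (1 / 2 : ℂ) * (π / -b) ^ (1 / 2 : ℂ) *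
        cexp (d - c₁ ^ 2 / (4 * b) + (0 - c₂ ^ 2 / (4 * b))) := by rw [Complex.exp_add]; ring
    _ = _ := by rw [h_sqrt]; ring_nf

theorem gabor_apply (lam sg x y θ : ℝ) (w : ℝ × ℝ) :
    gabor lam sg (x, y, θ) w =
      cexp (2 * π * I * ((w.1 - x) * Real.cos θ + (w.2 - y) * Real.sin θ) / lam -
        ((w.1 - x) ^ 2 + (w.2 - y) ^ 2) / (2 * sg ^ 2)) := by
  simp only [gabor, gaborMother, rot, Prod.fst_sub, Prod.snd_sub, Real.cos_neg, Real.sin_neg,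
    ← Complex.exp_add]
  congr 1
  have h_pyth : (Real.cos θ : ℂ) ^ 2 + (Real.sin θ : ℂ) ^ 2 = 1 := by
    exact_mod_cast Real.cos_sq_add_sin_sq θ
  push_cast at h_pyth ⊢
  linear_combination (-(((w.1 : ℂ) - x) ^ 2 + ((w.2 : ℂ) - y) ^ 2) / (2 * (sg : ℂ) ^ 2)) * h_pyth

theorem gabor_mul_conj_gabor_zero (lam sg x y θ : ℝ) (w : ℝ × ℝ) :
    gabor lam sg (x, y, θ) w * conj (gabor lam sg (0, 0, 0) w) =
      cexp (-(1 / sg ^ 2) * (w.1 ^ 2 + w.2 ^ 2) +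
        (x / sg ^ 2 + 2 * π * I * (Real.cos θ - 1) / lam) * w.1 +
        (y / sg ^ 2 + 2 * π * I * Real.sin θ / lam) * w.2 +
        (-(x ^ 2 + y ^ 2) / (2 * sg ^ 2) - 2 * π * I * (x * Real.cos θ + y * Real.sin θ) / lam)) := by
  rw [gabor_apply, gabor_apply, ← Complex.exp_conj, ← Complex.exp_add]
  congr 1
  simp only [map_sub, map_add, map_mul, map_div₀, map_pow, map_ofNat, conj_ofReal, conj_I,
    Real.cos_zero, Real.sin_zero]
  push_cast
  ring

theorem statement1_general (lam sg : ℝ) (hsg : 0 < sg) (x y θ : ℝ) :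
    ∫ w : ℝ × ℝ, gabor lam sg (x, y, θ) w * (starRingEnd ℂ) (gabor lam sg (0, 0, 0) w) =
      ((sg ^ 2 * Real.pi : ℝ) : ℂ) *
        Complex.exp (((-(x ^ 2 / (4 * sg ^ 2)) - y ^ 2 / (4 * sg ^ 2) -
            2 * sg ^ 2 * Real.pi ^ 2 * (1 - Real.cos θ) / lam ^ 2 : ℝ) : ℂ)) *
        Complex.exp (-Complex.I *
          ((Real.pi * (x * (1 + Real.cos θ) + y * Real.sin θ) / lam : ℝ) : ℂ)) := by
  have hsg₀ : (sg : ℂ) ≠ 0 := by exact_mod_cast hsg.ne'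
  have hb : (-(1 / (sg : ℂ) ^ 2)).re < 0 := by
    rw [← ofReal_pow, ← ofReal_one, ← ofReal_div, ← ofReal_neg, ofReal_re, neg_lt_zero]
    positivity
  simp_rw [gabor_mul_conj_gabor_zero]
  rw [integral_cexp_quadratic_prod hb, mul_assoc ((sg ^ 2 * π : ℝ) : ℂ), ← Complex.exp_add]
  congr 2
  · push_cast; field_simp
  · push_cast
    field_simp
    linear_combination 8 * (sg : ℂ) ^ 4 * π ^ 2 / lam ^ 2 *
      ((Complex.cos θ - 1) ^ 2 + Complex.sin θ ^ 2) * I_sq -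
      8 * (sg : ℂ) ^ 4 * π ^ 2 / lam ^ 2 * Complex.cos_sq_add_sin_sq (θ : ℂ)

/-- The `L²` inner product `⟨ψ_{x,y,θ}, ψ_{0,0,0}⟩` (conjugate-linear in the second
argument) equals
`σ²π · exp(−x²/(4σ²) − y²/(4σ²) − 2σ²π²(1−cos θ)/λ²) · exp(−iπ(x(1+cos θ)+y sin θ)/λ)`. -/
theorem statement1 (lam sg : ℝ) (hlam : 0 < lam) (hsg : 0 < sg) (x y θ : ℝ) :
    ∫ w : ℝ × ℝ, gabor lam sg (x, y, θ) w * (starRingEnd ℂ) (gabor lam sg (0, 0, 0) w) =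
      ((sg ^ 2 * Real.pi : ℝ) : ℂ) *
        Complex.exp (((-(x ^ 2 / (4 * sg ^ 2)) - y ^ 2 / (4 * sg ^ 2) -
            2 * sg ^ 2 * Real.pi ^ 2 * (1 - Real.cos θ) / lam ^ 2 : ℝ) : ℂ)) *
        Complex.exp (-Complex.I *
          ((Real.pi * (x * (1 + Real.cos θ) + y * Real.sin θ) / lam : ℝ) : ℂ)) :=
  statement1_general lam sg hsg x y θ
end

section
/- For every p = (x,y,θ) ∈ ℝ²×ℝ, the squared cortical distance from p to the origin equals d²(p, (0,0,0)) = 2σ²π − 2σ²π · exp( −x²/(4σ²) − y²/(4σ²) − 2σ²π²(1 − cos θ)/λ² ) · cos( π·( x(1 + cos θ) + y sin θ )/λ ). -/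
open MeasureTheory

/-- The cortical distance `d(p,q) = ‖ψ_p − ψ_q‖_{L²}`. -/
noncomputable def cdist (lam sg : ℝ) (p q : ℝ × ℝ × ℝ) : ℝ :=
  Real.sqrt (∫ w : ℝ × ℝ, ‖gabor lam sg p w - gabor lam sg q w‖ ^ 2)

/-!
The rotation `R_{-θ}` is orthogonal, so `ψ_{(x,y,θ)}(u,v)` splits as a product of a Gaussian wave
packet in `u`, centred at `x` with frequency `2π cos θ/λ`, and one in `v`, centred at `y` with
frequency `2π sin θ/λ`. Expanding `‖ψ_p - ψ_0‖² = ‖ψ_p‖² + ‖ψ_0‖² - 2 Re ⟨ψ_p, ψ_0⟩`, both norms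
are `πσ²` and the inner product is a product of two one-dimensional integrals
`∫ exp (b u² + c u + d)`, which are evaluated by completing the square.
-/

open Complex Real ComplexConjugate

lemma integral_norm_sub_sq {α : Type*} [MeasurableSpace α] {μ : Measure α} {f g : α → ℂ}
    (hf : Integrable (fun a => ‖f a‖ ^ 2) μ) (hg : Integrable (fun a => ‖g a‖ ^ 2) μ)
    (hfg : Integrable (fun a => f a * conj (g a)) μ) :
    ∫ a, ‖f a - g a‖ ^ 2 ∂μ =
      ∫ a, ‖f a‖ ^ 2 ∂μ + ∫ a, ‖g a‖ ^ 2 ∂μ - 2 * (∫ a, f a * conj (g a) ∂μ).re := by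
  have hpt (a : α) : ‖f a - g a‖ ^ 2 = ‖f a‖ ^ 2 + ‖g a‖ ^ 2 - 2 * (f a * conj (g a)).re := by
    simp only [Complex.sq_norm, normSq_sub]
  have hsum : Integrable (fun a => ‖f a‖ ^ 2 + ‖g a‖ ^ 2) μ := hf.add hg
  have hre : Integrable (fun a => (f a * conj (g a)).re) μ := hfg.re
  simp_rw [hpt]
  rw [integral_sub hsum (hre.const_mul 2), integral_add hf hg, integral_const_mul,
    ← reCLM_apply, ← ContinuousLinearMap.integral_comp_comm _ hfg]
  rfl

noncomputable def wavePacket (s ω c u : ℝ) : ℂ :=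
  cexp (((ω * (u - c) : ℝ) : ℂ) * I - (((u - c) ^ 2 / (2 * s ^ 2) : ℝ) : ℂ))

lemma norm_wavePacket_sq (s ω c u : ℝ) :
    ‖wavePacket s ω c u‖ ^ 2 = rexp (-(1 / s ^ 2) * (u - c) ^ 2) := by
  rw [wavePacket, Complex.norm_exp, ← Real.exp_nat_mul]
  congr 1
  simp only [sub_re, mul_re, ofReal_re, ofReal_im, I_re, I_im]
  ring

lemma integral_norm_wavePacket_sq (s ω c : ℝ) :
    ∫ u, ‖wavePacket s ω c u‖ ^ 2 = √(π * s ^ 2) := by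
  simp_rw [norm_wavePacket_sq]
  rw [integral_sub_right_eq_self (fun u => rexp (-(1 / s ^ 2) * u ^ 2)) c, integral_gaussian,
    div_div_eq_mul_div, div_one]

lemma integrable_norm_wavePacket_sq {s : ℝ} (hs : s ≠ 0) (ω c : ℝ) :
    Integrable fun u => ‖wavePacket s ω c u‖ ^ 2 := by
  simp_rw [norm_wavePacket_sq]
  exact (integrable_exp_neg_mul_sq (by positivity)).comp_sub_right c

lemma wavePacket_mul_conj (s ω ω' c u : ℝ) :
    wavePacket s ω c u * conj (wavePacket s ω' 0 u) =
      cexp (((-(1 / s ^ 2) : ℝ) : ℂ) * u ^ 2 + (((c / s ^ 2 : ℝ) : ℂ) + ((ω - ω' : ℝ) : ℂ) * I) * u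
        + (((-(c ^ 2 / (2 * s ^ 2)) : ℝ) : ℂ) - ((ω * c : ℝ) : ℂ) * I)) := by
  rw [wavePacket, wavePacket, ← Complex.exp_conj, ← Complex.exp_add]
  congr 1
  simp only [map_sub, map_mul, conj_ofReal, conj_I]
  push_cast
  ring

lemma integral_wavePacket_mul_conj {s : ℝ} (hs : s ≠ 0) (ω ω' c : ℝ) :
    ∫ u, wavePacket s ω c u * conj (wavePacket s ω' 0 u) =
      (√(π * s ^ 2) : ℂ) * cexp (((-(c ^ 2 / (4 * s ^ 2)) - s ^ 2 * (ω - ω') ^ 2 / 4 : ℝ) : ℂ)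
        - ((c * (ω + ω') / 2 : ℝ) : ℂ) * I) := by
  have hb : (((-(1 / s ^ 2)) : ℝ) : ℂ).re < 0 := by
    rw [ofReal_re, neg_lt_zero]; positivity
  simp_rw [wavePacket_mul_conj]
  rw [integral_cexp_quadratic hb]
  congr 1
  · rw [Real.sqrt_eq_rpow, ofReal_cpow (by positivity)]
    push_cast
    congr 1
    field_simp
  · congr 1
    push_cast
    have hs' : (s : ℂ) ≠ 0 := ofReal_ne_zero.mpr hs
    field_simp
    linear_combination 2 * (s : ℂ) ^ 4 * ((ω : ℂ) - ω') ^ 2 * I_sq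

lemma integrable_wavePacket_mul_conj {s : ℝ} (hs : s ≠ 0) (ω ω' c : ℝ) :
    Integrable fun u => wavePacket s ω c u * conj (wavePacket s ω' 0 u) := by
  simp_rw [wavePacket_mul_conj]
  exact integrable_cexp_quadratic' (by rw [ofReal_re, neg_lt_zero]; positivity) _ _

lemma gabor_eq_wavePacket_mul (lam sg x y θ : ℝ) (w : ℝ × ℝ) :
    gabor lam sg (x, y, θ) w =
      wavePacket sg (2 * π * Real.cos θ / lam) x w.1 *
        wavePacket sg (2 * π * Real.sin θ / lam) y w.2 := by
  simp only [gabor, gaborMother, rot, wavePacket, Prod.fst_sub, Prod.snd_sub, Real.cos_neg,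
    Real.sin_neg]
  rw [← Complex.exp_add, ← Complex.exp_add]
  congr 1
  push_cast
  linear_combination (-(((w.1 : ℂ) - x) ^ 2 + ((w.2 : ℂ) - y) ^ 2) / (2 * (sg : ℂ) ^ 2)) *
    Complex.sin_sq_add_cos_sq (θ : ℂ)

lemma integral_norm_gabor_sq (lam sg : ℝ) (p : ℝ × ℝ × ℝ) :
    ∫ w, ‖gabor lam sg p w‖ ^ 2 = π * sg ^ 2 := by
  obtain ⟨x, y, θ⟩ := p
  simp_rw [gabor_eq_wavePacket_mul, norm_mul, mul_pow]
  rw [Measure.volume_eq_prod,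
    integral_prod_mul (fun u => ‖wavePacket sg _ x u‖ ^ 2) (fun v => ‖wavePacket sg _ y v‖ ^ 2),
    integral_norm_wavePacket_sq, integral_norm_wavePacket_sq, Real.mul_self_sqrt (by positivity)]

lemma integrable_norm_gabor_sq (lam : ℝ) {sg : ℝ} (hsg : sg ≠ 0) (p : ℝ × ℝ × ℝ) :
    Integrable fun w => ‖gabor lam sg p w‖ ^ 2 := by
  obtain ⟨x, y, θ⟩ := p
  simp_rw [gabor_eq_wavePacket_mul, norm_mul, mul_pow]
  exact (integrable_norm_wavePacket_sq hsg _ x).mul_prod (integrable_norm_wavePacket_sq hsg _ y)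

lemma gabor_mul_conj_gabor_origin (lam sg x y θ : ℝ) (w : ℝ × ℝ) :
    gabor lam sg (x, y, θ) w * conj (gabor lam sg (0, 0, 0) w) =
      wavePacket sg (2 * π * Real.cos θ / lam) x w.1 * conj (wavePacket sg (2 * π / lam) 0 w.1) *
        (wavePacket sg (2 * π * Real.sin θ / lam) y w.2 * conj (wavePacket sg 0 0 w.2)) := by
  simp only [gabor_eq_wavePacket_mul, Real.cos_zero, Real.sin_zero, mul_one, mul_zero, zero_div,
    map_mul]
  ring

lemma integral_gabor_mul_conj_gabor_origin (lam : ℝ) {sg : ℝ} (hsg : sg ≠ 0) (x y θ : ℝ) :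
    ∫ w, gabor lam sg (x, y, θ) w * conj (gabor lam sg (0, 0, 0) w) =
      ((π * sg ^ 2 : ℝ) : ℂ) *
        cexp (((-(x ^ 2 / (4 * sg ^ 2)) - y ^ 2 / (4 * sg ^ 2) -
            2 * sg ^ 2 * π ^ 2 * (1 - Real.cos θ) / lam ^ 2 : ℝ) : ℂ) -
          ((π * (x * (1 + Real.cos θ) + y * Real.sin θ) / lam : ℝ) : ℂ) * I) := by
  simp_rw [gabor_mul_conj_gabor_origin]
  rw [Measure.volume_eq_prod,
    integral_prod_mul (fun u => wavePacket sg _ x u * conj (wavePacket sg _ 0 u))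
      (fun v => wavePacket sg _ y v * conj (wavePacket sg _ 0 v)),
    integral_wavePacket_mul_conj hsg, integral_wavePacket_mul_conj hsg, mul_mul_mul_comm,
    ← ofReal_mul, Real.mul_self_sqrt (by positivity), ← Complex.exp_add]
  congr 2
  push_cast
  linear_combination (-((sg : ℂ) ^ 2 * π ^ 2 / lam ^ 2)) * Complex.sin_sq_add_cos_sq (θ : ℂ)

lemma integrable_gabor_mul_conj_gabor_origin (lam : ℝ) {sg : ℝ} (hsg : sg ≠ 0) (x y θ : ℝ) :
    Integrable fun w => gabor lam sg (x, y, θ) w * conj (gabor lam sg (0, 0, 0) w) := by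
  simp_rw [gabor_mul_conj_gabor_origin]
  exact (integrable_wavePacket_mul_conj hsg _ _ x).mul_prod
    (integrable_wavePacket_mul_conj hsg _ _ y)

theorem statement2_general (lam sg : ℝ) (hsg : 0 < sg) (x y θ : ℝ) :
    cdist lam sg (x, y, θ) (0, 0, 0) ^ 2 =
      2 * sg ^ 2 * Real.pi -
        2 * sg ^ 2 * Real.pi *
          Real.exp (-(x ^ 2 / (4 * sg ^ 2)) - y ^ 2 / (4 * sg ^ 2) -
            2 * sg ^ 2 * Real.pi ^ 2 * (1 - Real.cos θ) / lam ^ 2) *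
          Real.cos (Real.pi * (x * (1 + Real.cos θ) + y * Real.sin θ) / lam) := by
  have hsg' : sg ≠ 0 := hsg.ne'
  rw [cdist, Real.sq_sqrt (integral_nonneg fun _ => by positivity),
    integral_norm_sub_sq (integrable_norm_gabor_sq lam hsg' _) (integrable_norm_gabor_sq lam hsg' _)
      (integrable_gabor_mul_conj_gabor_origin lam hsg' x y θ),
    integral_norm_gabor_sq, integral_norm_gabor_sq, integral_gabor_mul_conj_gabor_origin lam hsg',
    re_ofReal_mul, Complex.exp_re]
  simp only [sub_re, sub_im, ofReal_re, ofReal_im, mul_re, mul_im, I_re, I_im, mul_one, mul_zero,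
    sub_zero, zero_sub, add_zero, Real.cos_neg]
  ring

/-- Explicit formula for the squared cortical distance from `p = (x,y,θ)` to the
origin:
`d²(p,0) = 2σ²π − 2σ²π · exp(−x²/(4σ²) − y²/(4σ²) − 2σ²π²(1−cos θ)/λ²)
  · cos(π(x(1+cos θ)+y sin θ)/λ)`. -/
theorem statement2 (lam sg : ℝ) (hlam : 0 < lam) (hsg : 0 < sg) (x y θ : ℝ) :
    cdist lam sg (x, y, θ) (0, 0, 0) ^ 2 =
      2 * sg ^ 2 * Real.pi -
        2 * sg ^ 2 * Real.pi *
          Real.exp (-(x ^ 2 / (4 * sg ^ 2)) - y ^ 2 / (4 * sg ^ 2) -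
            2 * sg ^ 2 * Real.pi ^ 2 * (1 - Real.cos θ) / lam ^ 2) *
          Real.cos (Real.pi * (x * (1 + Real.cos θ) + y * Real.sin θ) / lam) :=
  statement2_general lam sg hsg x y θ
end

section
/- There exists ε > 0 such that every p = (x,y,θ) ∈ ℝ²×(−π,π] with d(p, (0,0,0)) < ε belongs to the patch P(0,0,0) = { (x,y,θ) : |x(1 + cos θ) + y sin θ| < λ }. In other words, a sufficiently small metric ball of the cortical distance around the origin is contained in the patch around the origin. -/
/-!
The modulus of `ψ_p` is the Gaussian of width `σ` centred at `(x, y)`, whatever `θ` and the phase.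
By the reverse triangle inequality, `d(p, 0)²` is therefore at least the squared `L²` distance
between two such Gaussians, which is `2πσ²(1 − exp(−(x² + y²)/(4σ²)))`. By Cauchy–Schwarz,
`|x(1 + cos θ) + y sin θ| ≤ |(x, y)|·|(1 + cos θ, sin θ)| ≤ 2|(x, y)|`, so a point outside the
patch has `|(x, y)| ≥ λ/2` and stays at cortical distance at least
`√(2πσ²(1 − exp(−λ²/(16σ²))))` from the origin.
-/

open MeasureTheory

lemma integral_norm_sub_norm_sq_le {α E : Type*} [MeasurableSpace α] {μ : Measure α}
    [NormedAddCommGroup E] {f g : α → E} (hf : MemLp f 2 μ) (hg : MemLp g 2 μ) :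
    ∫ a, (‖f a‖ - ‖g a‖) ^ 2 ∂μ ≤ ∫ a, ‖f a - g a‖ ^ 2 ∂μ := by
  refine integral_mono_of_nonneg (ae_of_all _ fun a => sq_nonneg _)
    ((memLp_two_iff_integrable_sq_norm (hf.sub hg).1).1 (hf.sub hg)) (ae_of_all _ fun a => ?_)
  simpa only [sq_abs] using pow_le_pow_left₀ (abs_nonneg _) (abs_norm_sub_norm_le (f a) (g a)) 2

lemma integrable_exp_neg_mul_sq_sub {b : ℝ} (hb : 0 < b) (m : ℝ) :
    Integrable fun u : ℝ => Real.exp (-b * (u - m) ^ 2) :=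
  (integrable_exp_neg_mul_sq hb).comp_sub_right m

lemma integral_exp_neg_mul_sq_sub (b m : ℝ) :
    ∫ u : ℝ, Real.exp (-b * (u - m) ^ 2) = Real.sqrt (Real.pi / b) := by
  rw [integral_sub_right_eq_self (fun u => Real.exp (-b * u ^ 2)) m, integral_gaussian]

lemma exp_neg_mul_sum_sq_sub (b : ℝ) (m w : ℝ × ℝ) :
    Real.exp (-b * ((w.1 - m.1) ^ 2 + (w.2 - m.2) ^ 2))
      = Real.exp (-b * (w.1 - m.1) ^ 2) * Real.exp (-b * (w.2 - m.2) ^ 2) := by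
  rw [← Real.exp_add]; ring_nf

lemma integrable_exp_neg_mul_sum_sq_sub {b : ℝ} (hb : 0 < b) (m : ℝ × ℝ) :
    Integrable fun w : ℝ × ℝ => Real.exp (-b * ((w.1 - m.1) ^ 2 + (w.2 - m.2) ^ 2)) := by
  simp_rw [exp_neg_mul_sum_sq_sub, Measure.volume_eq_prod]
  exact (integrable_exp_neg_mul_sq_sub hb m.1).mul_prod (integrable_exp_neg_mul_sq_sub hb m.2)

lemma integral_exp_neg_mul_sum_sq_sub {b : ℝ} (hb : 0 < b) (m : ℝ × ℝ) :
    ∫ w : ℝ × ℝ, Real.exp (-b * ((w.1 - m.1) ^ 2 + (w.2 - m.2) ^ 2)) = Real.pi / b := by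
  simp_rw [exp_neg_mul_sum_sq_sub, Measure.volume_eq_prod]
  rw [integral_prod_mul (f := fun u => Real.exp (-b * (u - m.1) ^ 2))
    (g := fun v => Real.exp (-b * (v - m.2) ^ 2)), integral_exp_neg_mul_sq_sub,
    integral_exp_neg_mul_sq_sub, Real.mul_self_sqrt (by positivity)]

noncomputable def gaussBump (sg : ℝ) (c w : ℝ × ℝ) : ℝ :=
  Real.exp (-(((w.1 - c.1) ^ 2 + (w.2 - c.2) ^ 2) / (2 * sg ^ 2)))

section gaussBump

variable {sg : ℝ}

lemma gaussBump_mul_gaussBump (hsg : sg ≠ 0) (c c' w : ℝ × ℝ) :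
    gaussBump sg c w * gaussBump sg c' w
      = Real.exp (-(((c.1 - c'.1) ^ 2 + (c.2 - c'.2) ^ 2) / (4 * sg ^ 2))) *
        Real.exp (-(1 / sg ^ 2) *
          ((w.1 - (c.1 + c'.1) / 2) ^ 2 + (w.2 - (c.2 + c'.2) / 2) ^ 2)) := by
  -- completing the square: `|w - c|² + |w - c'|² = |c - c'|² / 2 + 2 |w - (c + c') / 2|²`
  simp only [gaussBump, ← Real.exp_add]
  congr 1
  field_simp
  ring

lemma integrable_gaussBump_mul_gaussBump (hsg : sg ≠ 0) (c c' : ℝ × ℝ) :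
    Integrable fun w => gaussBump sg c w * gaussBump sg c' w := by
  simp_rw [gaussBump_mul_gaussBump hsg]
  exact (integrable_exp_neg_mul_sum_sq_sub (by positivity) ((c.1 + c'.1) / 2, (c.2 + c'.2) / 2)
    ).const_mul _

lemma integral_gaussBump_mul_gaussBump (hsg : sg ≠ 0) (c c' : ℝ × ℝ) :
    ∫ w, gaussBump sg c w * gaussBump sg c' w
      = Real.pi * sg ^ 2 * Real.exp (-(((c.1 - c'.1) ^ 2 + (c.2 - c'.2) ^ 2) / (4 * sg ^ 2))) := by
  simp_rw [gaussBump_mul_gaussBump hsg]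
  rw [integral_const_mul, integral_exp_neg_mul_sum_sq_sub (by positivity)
    ((c.1 + c'.1) / 2, (c.2 + c'.2) / 2)]
  field_simp

lemma integral_gaussBump_sub_gaussBump_sq (hsg : sg ≠ 0) (c c' : ℝ × ℝ) :
    ∫ w, (gaussBump sg c w - gaussBump sg c' w) ^ 2
      = 2 * Real.pi * sg ^ 2 *
        (1 - Real.exp (-(((c.1 - c'.1) ^ 2 + (c.2 - c'.2) ^ 2) / (4 * sg ^ 2)))) := by
  have hint := integrable_gaussBump_mul_gaussBump hsg
  have hexpand : (fun w => (gaussBump sg c w - gaussBump sg c' w) ^ 2) = fun w =>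
      gaussBump sg c w * gaussBump sg c w - 2 * (gaussBump sg c w * gaussBump sg c' w) +
        gaussBump sg c' w * gaussBump sg c' w := funext fun w => by ring
  have hint' : Integrable fun w =>
      gaussBump sg c w * gaussBump sg c w - 2 * (gaussBump sg c w * gaussBump sg c' w) :=
    (hint c c).sub ((hint c c').const_mul 2)
  rw [hexpand, integral_add hint' (hint c' c'),
    integral_sub (hint c c) ((hint c c').const_mul 2), integral_const_mul]
  simp only [integral_gaussBump_mul_gaussBump hsg, sub_self, zero_pow two_ne_zero, add_zero,
    zero_div, neg_zero, Real.exp_zero]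
  ring

end gaussBump

lemma rot_fst_sq_add_rot_snd_sq (θ : ℝ) (v : ℝ × ℝ) :
    (rot θ v).1 ^ 2 + (rot θ v).2 ^ 2 = v.1 ^ 2 + v.2 ^ 2 := by
  simp only [rot]
  linear_combination (v.1 ^ 2 + v.2 ^ 2) * Real.sin_sq_add_cos_sq θ

lemma norm_gabor (lam sg : ℝ) (p : ℝ × ℝ × ℝ) (w : ℝ × ℝ) :
    ‖gabor lam sg p w‖ = gaussBump sg (p.1, p.2.1) w := by
  have hphase : (2 * (Real.pi : ℂ) * Complex.I *
      ((rot (-p.2.2) (w - (p.1, p.2.1))).1 : ℂ) / (lam : ℂ)).re = 0 := by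
    simp [Complex.div_re, Complex.mul_re, Complex.mul_im]
  rw [gabor, gaborMother, norm_mul, Complex.norm_exp, Complex.norm_exp, hphase, Real.exp_zero,
    one_mul, Complex.neg_re, Complex.ofReal_re, rot_fst_sq_add_rot_snd_sq, gaussBump]
  rfl

lemma continuous_gabor (lam sg : ℝ) (p : ℝ × ℝ × ℝ) : Continuous (gabor lam sg p) := by
  unfold gabor gaborMother rot
  fun_prop

lemma memLp_gabor {lam sg : ℝ} (hsg : sg ≠ 0) (p : ℝ × ℝ × ℝ) :
    MemLp (gabor lam sg p) 2 := by
  refine (memLp_two_iff_integrable_sq_norm (continuous_gabor lam sg p).aestronglyMeasurable).2 ?_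
  simp_rw [norm_gabor, sq]
  exact integrable_gaussBump_mul_gaussBump hsg _ _

lemma two_mul_pi_mul_sq_mul_one_sub_exp_le_cdist_sq {lam sg : ℝ} (hsg : sg ≠ 0)
    (p q : ℝ × ℝ × ℝ) :
    2 * Real.pi * sg ^ 2 *
        (1 - Real.exp (-(((p.1 - q.1) ^ 2 + (p.2.1 - q.2.1) ^ 2) / (4 * sg ^ 2))))
      ≤ cdist lam sg p q ^ 2 := by
  rw [cdist, Real.sq_sqrt (integral_nonneg fun w => sq_nonneg _),
    ← integral_gaussBump_sub_gaussBump_sq hsg (p.1, p.2.1) (q.1, q.2.1)]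
  simp_rw [← norm_gabor lam]
  exact integral_norm_sub_norm_sq_le (memLp_gabor hsg p) (memLp_gabor hsg q)

lemma sq_mul_one_add_cos_add_mul_sin_le (x y θ : ℝ) :
    (x * (1 + Real.cos θ) + y * Real.sin θ) ^ 2 ≤ 4 * (x ^ 2 + y ^ 2) := by
  nlinarith [sq_nonneg (x * Real.sin θ - y * (1 + Real.cos θ)), Real.sin_sq_add_cos_sq θ,
    Real.cos_le_one θ, sq_nonneg x, sq_nonneg y]

/-- A sufficiently small metric ball of the cortical distance around the origin is
contained in the patch `P(0,0,0) = {(x,y,θ) : |x(1+cos θ) + y sin θ| < λ}`. -/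
theorem statement7 (lam sg : ℝ) (hlam : 0 < lam) (hsg : 0 < sg) :
    ∃ ε > 0, ∀ x y θ : ℝ, θ ∈ Set.Ioc (-Real.pi) Real.pi →
      cdist lam sg (x, y, θ) (0, 0, 0) < ε →
      |x * (1 + Real.cos θ) + y * Real.sin θ| < lam := by
  have hexp : Real.exp (-(lam ^ 2 / 4 / (4 * sg ^ 2))) < 1 :=
    Real.exp_lt_one_iff.2 (neg_neg_of_pos (by positivity))
  refine ⟨Real.sqrt (2 * Real.pi * sg ^ 2 * (1 - Real.exp (-(lam ^ 2 / 4 / (4 * sg ^ 2))))),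
    Real.sqrt_pos.2 (mul_pos (by positivity) (sub_pos.2 hexp)), fun x y θ _ hd => ?_⟩
  by_contra! hE
  have hcentre : lam ^ 2 / 4 ≤ x ^ 2 + y ^ 2 := by
    nlinarith [sq_mul_one_add_cos_add_mul_sin_le x y θ,
      sq_abs (x * (1 + Real.cos θ) + y * Real.sin θ), mul_self_le_mul_self hlam.le hE]
  refine hd.not_ge ((Real.sqrt_le_left (Real.sqrt_nonneg _)).2 ?_)
  calc 2 * Real.pi * sg ^ 2 * (1 - Real.exp (-(lam ^ 2 / 4 / (4 * sg ^ 2))))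
      ≤ 2 * Real.pi * sg ^ 2 * (1 - Real.exp (-((x ^ 2 + y ^ 2) / (4 * sg ^ 2)))) := by gcongr
    _ ≤ cdist lam sg (x, y, θ) (0, 0, 0) ^ 2 := by
      simpa using
        two_mul_pi_mul_sq_mul_one_sub_exp_le_cdist_sq (lam := lam) hsg.ne' (x, y, θ) (0, 0, 0)
end

section
/- Let X be a measurable space, μ and μ' two measures on X, d, d' : X × X → ℝ two functions, and constants s > 0, κ ≥ 1, M ≥ 1. For r > 0 write B_r(x) = {y : d(x,y) < r} and B'_r(x) = {y : d'(x,y) < r}, assume all such balls are measurable, assume x ↦ μ(B_r(x)) and x ↦ μ'(B'_r(x)) are measurable, and define the weighted measures μ_r(A) = ∫_A μ(B_r(x))^{−1/2} dμ(x) and μ'_r(A) = ∫_A μ'(B'_r(x))^{−1/2} dμ'(x). Assume: (i) κ^{−s}·μ(A) ≤ μ'(A) ≤ κ^{s}·μ(A) for every measurable A ⊆ X; (ii) κ^{−1}·d(x,y) ≤ d'(x,y) ≤ κ·d(x,y) for all x,y ∈ X; (iii) μ(B_{κr}(x)) ≤ M·μ(B_r(x)) for all x ∈ X and r > 0. Then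 for every measurable A ⊆ X and every r > 0: (κ^{3s/2}M)^{−1}·μ_r(A) ≤ μ'_r(A) ≤ κ^{3s/2}M·μ_r(A). -/
/-!
Write `V x = μ(B_r(x))` and `V' x = μ'(B'_r(x))`. Since `B_{r/κ}(x) ⊆ B'_r(x) ⊆ B_{κr}(x)`,
comparability of the measures together with one doubling step gives `V ≤ κ^s M V'` and
`V' ≤ κ^s M V`, so the weights `V^{-1/2}` and `V'^{-1/2}` agree up to `(κ^s M)^{1/2}`.
Changing the integrating measure costs another `κ^s`, and `κ^s (κ^s M)^{1/2} ≤ κ^{3s/2} M`.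
-/

open MeasureTheory ENNReal

theorem ENNReal.rpow_neg_le_mul_rpow_neg {a b C : ℝ≥0∞} {p : ℝ} (hp : 0 ≤ p) (hC₀ : C ≠ 0)
    (hC : C ≠ ∞) (h : a ≤ C * b) : b ^ (-p) ≤ C ^ p * a ^ (-p) := by
  have hinv : b⁻¹ ≤ C * a⁻¹ :=
    calc b⁻¹ = C * (C * b)⁻¹ := by
          rw [ENNReal.mul_inv (.inl hC₀) (.inl hC), ← mul_assoc, ENNReal.mul_inv_cancel hC₀ hC,
            one_mul]
      _ ≤ C * a⁻¹ := by gcongr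
  rw [ENNReal.rpow_neg, ENNReal.rpow_neg, ← ENNReal.inv_rpow, ← ENNReal.inv_rpow,
    ← ENNReal.mul_rpow_of_nonneg _ _ hp]
  gcongr

theorem ENNReal.ofReal_rpow_mul_rpow_half_le {κ s M : ℝ} (hκ : 0 < κ) (hM : 1 ≤ M) :
    ENNReal.ofReal (κ ^ s) * (ENNReal.ofReal (κ ^ s) * ENNReal.ofReal M) ^ ((1 : ℝ) / 2) ≤
      ENNReal.ofReal (κ ^ (3 * s / 2) * M) := by
  have hκs : 0 < κ ^ s := Real.rpow_pos_of_pos hκ s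
  rw [← ENNReal.ofReal_mul hκs.le, ENNReal.ofReal_rpow_of_nonneg (by positivity) (by norm_num),
    ← ENNReal.ofReal_mul hκs.le]
  refine ENNReal.ofReal_le_ofReal ?_
  calc κ ^ s * (κ ^ s * M) ^ ((1 : ℝ) / 2) = κ ^ (3 * s / 2) * M ^ ((1 : ℝ) / 2) := by
        rw [Real.mul_rpow hκs.le (by positivity), ← Real.rpow_mul hκ.le, ← mul_assoc,
          ← Real.rpow_add hκ]
        ring_nf
    _ ≤ κ ^ (3 * s / 2) * M := by
        gcongr
        exact Real.rpow_le_self_of_one_le hM (by norm_num)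

namespace MeasureTheory

variable {X : Type*} [MeasurableSpace X] {μ μ' : Measure X}

theorem Measure.le_smul_of_inv_mul_le {c : ℝ≥0∞} (hc₀ : c ≠ 0) (hc : c ≠ ∞)
    (h : ∀ A, MeasurableSet A → c⁻¹ * μ A ≤ μ' A) : μ ≤ c • μ' :=
  Measure.le_iff.2 fun A hA => (ENNReal.inv_mul_le_iff hc₀ hc).1 (h A hA)

theorem setLIntegral_rpow_neg_le_of_le_smul {c K : ℝ≥0∞} {p : ℝ} {V V' : X → ℝ≥0∞}
    (hμ : μ' ≤ c • μ) (hp : 0 ≤ p) (hK₀ : K ≠ 0) (hK : K ≠ ∞) (hV : ∀ x, V x ≤ K * V' x)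
    (A : Set X) :
    ∫⁻ x in A, V' x ^ (-p) ∂μ' ≤ c * K ^ p * ∫⁻ x in A, V x ^ (-p) ∂μ :=
  calc ∫⁻ x in A, V' x ^ (-p) ∂μ' ≤ ∫⁻ x in A, K ^ p * V x ^ (-p) ∂μ' :=
        lintegral_mono fun x => ENNReal.rpow_neg_le_mul_rpow_neg hp hK₀ hK (hV x)
    _ ≤ ∫⁻ x in A, K ^ p * V x ^ (-p) ∂(c • μ) :=
        lintegral_mono' (Measure.restrict_mono subset_rfl hμ) le_rfl
    _ = c * K ^ p * ∫⁻ x in A, V x ^ (-p) ∂μ := by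
        rw [Measure.restrict_smul, lintegral_smul_measure,
          lintegral_const_mul' _ _ (ENNReal.rpow_ne_top_of_nonneg hp hK), smul_eq_mul, mul_assoc]

variable {d d' : X → X → ℝ} {κ : ℝ} {c M : ℝ≥0∞}

theorem measure_ball_le_of_doubling_of_le_smul (hκ : 0 < κ) (hμ : μ ≤ c • μ')
    (hd : ∀ x y, d' x y ≤ κ * d x y)
    (hdbl : ∀ x, ∀ r > (0 : ℝ), μ {y | d x y < κ * r} ≤ M * μ {y | d x y < r})
    (x : X) {r : ℝ} (hr : 0 < r) : μ {y | d x y < r} ≤ c * M * μ' {y | d' x y < r} := by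
  have hsub : {y | d x y < r / κ} ⊆ {y | d' x y < r} := fun y (hy : d x y < r / κ) =>
    show d' x y < r from (hd x y).trans_lt ((lt_div_iff₀' hκ).1 hy)
  calc μ {y | d x y < r} = μ {y | d x y < κ * (r / κ)} := by rw [mul_div_cancel₀ r hκ.ne']
    _ ≤ M * μ {y | d x y < r / κ} := hdbl x _ (div_pos hr hκ)
    _ ≤ M * (c * μ' {y | d' x y < r}) := by
        gcongr
        exact (hμ _).trans (by rw [Measure.smul_apply, smul_eq_mul]; gcongr)
    _ = c * M * μ' {y | d' x y < r} := by ring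

theorem measure_ball_le_of_le_smul_of_doubling (hκ : 0 < κ) (hμ' : μ' ≤ c • μ)
    (hd : ∀ x y, κ⁻¹ * d x y ≤ d' x y)
    (hdbl : ∀ x, ∀ r > (0 : ℝ), μ {y | d x y < κ * r} ≤ M * μ {y | d x y < r})
    (x : X) {r : ℝ} (hr : 0 < r) : μ' {y | d' x y < r} ≤ c * M * μ {y | d x y < r} := by
  have hsub : {y | d' x y < r} ⊆ {y | d x y < κ * r} := fun y (hy : d' x y < r) =>
    show d x y < κ * r from (inv_mul_lt_iff₀ hκ).1 ((hd x y).trans_lt hy)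
  calc μ' {y | d' x y < r} ≤ c * μ {y | d x y < κ * r} :=
        (hμ' _).trans (by rw [Measure.smul_apply, smul_eq_mul]; gcongr)
    _ ≤ c * (M * μ {y | d x y < r}) := by gcongr; exact hdbl x r hr
    _ = c * M * μ {y | d x y < r} := by ring

end MeasureTheory

theorem statement15_general {X : Type*} [MeasurableSpace X] (μ μ' : Measure X)
    (d d' : X → X → ℝ) (s κ M : ℝ) (hκ : 1 ≤ κ) (hM : 1 ≤ M)
    (hμ₁ : ∀ A : Set X, MeasurableSet A → ENNReal.ofReal (κ ^ (-s)) * μ A ≤ μ' A)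
    (hμ₂ : ∀ A : Set X, MeasurableSet A → μ' A ≤ ENNReal.ofReal (κ ^ s) * μ A)
    (hd₁ : ∀ x y : X, κ⁻¹ * d x y ≤ d' x y)
    (hd₂ : ∀ x y : X, d' x y ≤ κ * d x y)
    (hdbl : ∀ x : X, ∀ r > (0 : ℝ),
      μ {y | d x y < κ * r} ≤ ENNReal.ofReal M * μ {y | d x y < r}) :
    ∀ A : Set X, MeasurableSet A → ∀ r > (0 : ℝ),
      (ENNReal.ofReal (κ ^ (3 * s / 2) * M))⁻¹ *
          ∫⁻ x in A, (μ {y | d x y < r}) ^ (-(1 : ℝ) / 2) ∂μ ≤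
        ∫⁻ x in A, (μ' {y | d' x y < r}) ^ (-(1 : ℝ) / 2) ∂μ' ∧
      ∫⁻ x in A, (μ' {y | d' x y < r}) ^ (-(1 : ℝ) / 2) ∂μ' ≤
        ENNReal.ofReal (κ ^ (3 * s / 2) * M) *
          ∫⁻ x in A, (μ {y | d x y < r}) ^ (-(1 : ℝ) / 2) ∂μ := by
  intro A _ r hr
  have hκ₀ : 0 < κ := one_pos.trans_le hκ
  set c := ENNReal.ofReal (κ ^ s)
  have hc₀ : c ≠ 0 := by simpa [c] using Real.rpow_pos_of_pos hκ₀ s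
  have hμ : μ ≤ c • μ' := Measure.le_smul_of_inv_mul_le hc₀ ofReal_ne_top <| by
    rwa [← ENNReal.ofReal_inv_of_pos (Real.rpow_pos_of_pos hκ₀ s), ← Real.rpow_neg hκ₀.le]
  have hμ' : μ' ≤ c • μ := Measure.le_iff.2 fun B hB => by simpa using hμ₂ B hB
  have hK₀ : c * ENNReal.ofReal M ≠ 0 := mul_ne_zero hc₀ (by simpa using one_pos.trans_le hM)
  have hK : c * ENNReal.ofReal M ≠ ∞ := mul_ne_top ofReal_ne_top ofReal_ne_top
  have hconst := ENNReal.ofReal_rpow_mul_rpow_half_le (s := s) hκ₀ hM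
  have hK'₀ : ENNReal.ofReal (κ ^ (3 * s / 2) * M) ≠ 0 := by
    simpa using mul_pos (Real.rpow_pos_of_pos hκ₀ _) (one_pos.trans_le hM)
  rw [neg_div]
  constructor
  · rw [ENNReal.inv_mul_le_iff hK'₀ ofReal_ne_top]
    refine (setLIntegral_rpow_neg_le_of_le_smul hμ (by norm_num) hK₀ hK
      (measure_ball_le_of_le_smul_of_doubling hκ₀ hμ' hd₁ hdbl · hr) A).trans ?_
    gcongr
  · refine (setLIntegral_rpow_neg_le_of_le_smul hμ' (by norm_num) hK₀ hK
      (measure_ball_le_of_doubling_of_le_smul hκ₀ hμ hd₂ hdbl · hr) A).trans ?_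
    gcongr

/-- If `μ` and `μ'` are comparable measures (`κ^{−s}μ ≤ μ' ≤ κ^{s}μ`), `d` and `d'`
are comparable distance functions (`κ⁻¹d ≤ d' ≤ κd`), and `μ` satisfies the doubling
property `μ(B_{κr}(x)) ≤ M·μ(B_r(x))`, then the weighted measures
`μ_r(A) = ∫_A μ(B_r(x))^{−1/2} dμ(x)` and `μ'_r(A) = ∫_A μ'(B'_r(x))^{−1/2} dμ'(x)`
are comparable: `(κ^{3s/2}M)⁻¹·μ_r(A) ≤ μ'_r(A) ≤ κ^{3s/2}M·μ_r(A)`. -/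
theorem statement15 {X : Type*} [MeasurableSpace X] (μ μ' : Measure X)
    (d d' : X → X → ℝ) (s κ M : ℝ) (hs : 0 < s) (hκ : 1 ≤ κ) (hM : 1 ≤ M)
    (hB : ∀ (x : X) (r : ℝ), MeasurableSet {y | d x y < r})
    (hB' : ∀ (x : X) (r : ℝ), MeasurableSet {y | d' x y < r})
    (hmeas : ∀ r : ℝ, Measurable fun x => μ {y | d x y < r})
    (hmeas' : ∀ r : ℝ, Measurable fun x => μ' {y | d' x y < r})
    (hμ₁ : ∀ A : Set X, MeasurableSet A → ENNReal.ofReal (κ ^ (-s)) * μ A ≤ μ' A)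
    (hμ₂ : ∀ A : Set X, MeasurableSet A → μ' A ≤ ENNReal.ofReal (κ ^ s) * μ A)
    (hd₁ : ∀ x y : X, κ⁻¹ * d x y ≤ d' x y)
    (hd₂ : ∀ x y : X, d' x y ≤ κ * d x y)
    (hdbl : ∀ x : X, ∀ r > (0 : ℝ),
      μ {y | d x y < κ * r} ≤ ENNReal.ofReal M * μ {y | d x y < r}) :
    ∀ A : Set X, MeasurableSet A → ∀ r > (0 : ℝ),
      (ENNReal.ofReal (κ ^ (3 * s / 2) * M))⁻¹ *
          ∫⁻ x in A, (μ {y | d x y < r}) ^ (-(1 : ℝ) / 2) ∂μ ≤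
        ∫⁻ x in A, (μ' {y | d' x y < r}) ^ (-(1 : ℝ) / 2) ∂μ' ∧
      ∫⁻ x in A, (μ' {y | d' x y < r}) ^ (-(1 : ℝ) / 2) ∂μ' ≤
        ENNReal.ofReal (κ ^ (3 * s / 2) * M) *
          ∫⁻ x in A, (μ {y | d x y < r}) ^ (-(1 : ℝ) / 2) ∂μ :=
  statement15_general μ μ' d d' s κ M hκ hM hμ₁ hμ₂ hd₁ hd₂ hdbl
end

section
/- Let X be a measurable space, μ and μ' two measures on X, d, d' : X × X → ℝ, and constants s > 0, κ ≥ 1, M ≥ 1, Θ > 0, r > 0 and t ∈ (0,1]. With B_r(x), B'_r(x), μ_r, μ'_r defined as before (all balls measurable, ball-volume functions measurable, with 0 < μ(B_ρ(x)) < ∞ and 0 < μ'(B'_ρ(x)) < ∞ for the radii ρ ∈ {r, rt} involved), assume: (i) κ^{−s}·μ(A) ≤ μ'(A) ≤ κ^{s}·μ(A) for every measurable A; (ii) κ^{−1}·d ≤ d' ≤ κ·d pointwise; (iii) μ(B_{κρ}(x)) ≤ M·μ(B_ρ(x)) for all x and ρ > 0. Fix x ∈ X, a measurable set A ⊆ B_r(x),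 and a measurable set A_t ⊆ X (the image Φ_t(x,A) of A under the contraction map), and assume the measure contraction inequality μ_r(A)/√(μ(B_r(x))) ≤ Θ·μ_{rt}(A_t)/√(μ(B_{rt}(x))) holds for (d,μ). Then the corresponding inequality holds for (d',μ') with constant Θκ^{4s}M³: μ'_r(A)/√(μ'(B'_r(x))) ≤ Θκ^{4s}M³·μ'_{rt}(A_t)/√(μ'(B'_{rt}(x))). -/
/-!
Comparability of the measures and distances, together with doubling, makes every ball volume of
one structure comparable to the corresponding one of the other with constant `C = κ^s M`. Hence
the ratio `μ_r(A)/√μ(B_r(x))` changes by at most a factor `κ^s C` when passing between `(d, μ)`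
and `(d', μ')`: `κ^s` from the integrating measure and `√C` from each of the two ball volumes.
Passing to `(d, μ)` at radius `r`, applying the hypothesis, and passing back at radius `rt`
gives the constant `Θ (κ^s C)² = Θ κ^{4s} M² ≤ Θ κ^{4s} M³`.
-/

open MeasureTheory

open scoped ENNReal

namespace ENNReal

theorem inv_le_mul_inv_of_le_mul {u v c : ℝ≥0∞} (hc₀ : c ≠ 0) (hc : c ≠ ∞) (h : u ≤ c * v) :
    v⁻¹ ≤ c * u⁻¹ := by
  rw [← ENNReal.inv_mul_le_iff hc₀ hc, ← ENNReal.mul_inv (.inl hc₀) (.inl hc)]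
  exact ENNReal.inv_le_inv' h

theorem rpow_half_le_of_le_mul {u v c : ℝ≥0∞} (h : u ≤ c * v) :
    u ^ ((1 : ℝ) / 2) ≤ c ^ ((1 : ℝ) / 2) * v ^ ((1 : ℝ) / 2) := by
  rw [← ENNReal.mul_rpow_of_nonneg _ _ (by norm_num)]
  exact ENNReal.rpow_le_rpow h (by norm_num)

theorem rpow_neg_half_le_of_le_mul {u v c : ℝ≥0∞} (hc₀ : c ≠ 0) (hc : c ≠ ∞) (h : u ≤ c * v) :
    v ^ (-(1 : ℝ) / 2) ≤ c ^ ((1 : ℝ) / 2) * u ^ (-(1 : ℝ) / 2) := by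
  rw [neg_div, ENNReal.rpow_neg, ENNReal.rpow_neg]
  exact inv_le_mul_inv_of_le_mul (by positivity) (by simp [hc]) (rpow_half_le_of_le_mul h)

theorem rpow_half_mul_rpow_half (c : ℝ≥0∞) : c ^ ((1 : ℝ) / 2) * c ^ ((1 : ℝ) / 2) = c := by
  rw [← ENNReal.rpow_add_of_nonneg _ _ (by norm_num) (by norm_num)]
  norm_num

end ENNReal

section

variable {X : Type*} [MeasurableSpace X]

theorem setLIntegral_le_mul_of_le_smul {ν ν' : Measure X} {a : ℝ≥0∞} (h : ν' ≤ a • ν)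
    (S : Set X) (f : X → ℝ≥0∞) : ∫⁻ y in S, f y ∂ν' ≤ a * ∫⁻ y in S, f y ∂ν :=
  (lintegral_mono' (Measure.restrict_mono subset_rfl h) le_rfl).trans_eq
    (setLIntegral_smul_measure a f S)

/-- The quantity `μ_r(S) / √μ(B_r(x))` of the measure contraction inequality, with `B y` the ball
of the fixed radius `r` around `y`. -/
noncomputable def contractionRatio (ν : Measure X) (B : X → Set X) (x : X) (S : Set X) :
    ℝ≥0∞ :=
  (∫⁻ y in S, ν (B y) ^ (-(1 : ℝ) / 2) ∂ν) / ν (B x) ^ ((1 : ℝ) / 2)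

/-- Ball volumes enter the ratio twice, as `ν(B y)^{-1/2}` in the integrand and as `ν(B x)^{1/2}`
in the denominator, so comparing them with constant `C` costs `√C · √C`. -/
theorem contractionRatio_le_of_le_smul {ν ν' : Measure X} {B B' : X → Set X} {a C : ℝ≥0∞}
    (hC₀ : C ≠ 0) (hC : C ≠ ∞) (hν : ν' ≤ a • ν) (hB : ∀ y, ν (B y) ≤ C * ν' (B' y))
    (x : X) (S : Set X) :
    contractionRatio ν' B' x S ≤ a * C * contractionRatio ν B x S := by
  have hint : ∫⁻ y in S, ν' (B' y) ^ (-(1 : ℝ) / 2) ∂ν' ≤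
      a * (C ^ ((1 : ℝ) / 2) * ∫⁻ y in S, ν (B y) ^ (-(1 : ℝ) / 2) ∂ν) := by
    calc ∫⁻ y in S, ν' (B' y) ^ (-(1 : ℝ) / 2) ∂ν'
        ≤ a * ∫⁻ y in S, ν' (B' y) ^ (-(1 : ℝ) / 2) ∂ν := setLIntegral_le_mul_of_le_smul hν S _
      _ ≤ a * ∫⁻ y in S, C ^ ((1 : ℝ) / 2) * ν (B y) ^ (-(1 : ℝ) / 2) ∂ν := by
        gcongr with y
        exact ENNReal.rpow_neg_half_le_of_le_mul hC₀ hC (hB y)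
      _ = a * (C ^ ((1 : ℝ) / 2) * ∫⁻ y in S, ν (B y) ^ (-(1 : ℝ) / 2) ∂ν) := by
        rw [lintegral_const_mul' _ _ (by simp [hC])]
  have hcenter : (ν' (B' x) ^ ((1 : ℝ) / 2))⁻¹ ≤ C ^ ((1 : ℝ) / 2) * (ν (B x) ^ ((1 : ℝ) / 2))⁻¹ :=
    ENNReal.inv_le_mul_inv_of_le_mul (by positivity) (by simp [hC])
      (ENNReal.rpow_half_le_of_le_mul (hB x))
  unfold contractionRatio
  calc _ ≤ a * (C ^ ((1 : ℝ) / 2) * ∫⁻ y in S, ν (B y) ^ (-(1 : ℝ) / 2) ∂ν) *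
        (C ^ ((1 : ℝ) / 2) * (ν (B x) ^ ((1 : ℝ) / 2))⁻¹) := by
        rw [div_eq_mul_inv _ (ν' (B' x) ^ ((1 : ℝ) / 2))]; gcongr
    _ = a * (C ^ ((1 : ℝ) / 2) * C ^ ((1 : ℝ) / 2)) *
        ((∫⁻ y in S, ν (B y) ^ (-(1 : ℝ) / 2) ∂ν) * (ν (B x) ^ ((1 : ℝ) / 2))⁻¹) := by ac_rfl
    _ = a * C * ((∫⁻ y in S, ν (B y) ^ (-(1 : ℝ) / 2) ∂ν) / ν (B x) ^ ((1 : ℝ) / 2)) := by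
      rw [ENNReal.rpow_half_mul_rpow_half, div_eq_mul_inv _ (ν (B x) ^ ((1 : ℝ) / 2))]

end

theorem setOf_lt_subset_setOf_lt_mul {X : Type*} {e f : X → X → ℝ} {κ : ℝ} (hκ : 0 < κ)
    (h : ∀ x y, e x y ≤ κ * f x y) (y : X) (ρ : ℝ) :
    {z | f y z < ρ} ⊆ {z | e y z < κ * ρ} :=
  fun z hz => (h y z).trans_lt (mul_lt_mul_of_pos_left hz hκ)

section

variable {X : Type*} [MeasurableSpace X] {μ μ' : Measure X} {d d' : X → X → ℝ} {κ ρ : ℝ}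
  {a M : ℝ≥0∞}

theorem measure_ball_le_of_doubling_of_ball_subset (hμ : μ' ≤ a • μ)
    (hsub : ∀ y ρ, {z | d' y z < ρ} ⊆ {z | d y z < κ * ρ})
    (hdbl : ∀ x, ∀ ρ > (0 : ℝ), μ {y | d x y < κ * ρ} ≤ M * μ {y | d x y < ρ})
    (y : X) (hρ : 0 < ρ) :
    μ' {z | d' y z < ρ} ≤ a * M * μ {z | d y z < ρ} :=
  calc μ' {z | d' y z < ρ} ≤ a * μ {z | d' y z < ρ} := hμ _
    _ ≤ a * μ {z | d y z < κ * ρ} := by gcongr a * ?_; exact measure_mono (hsub y ρ)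
    _ ≤ a * (M * μ {z | d y z < ρ}) := by gcongr; exact hdbl y ρ hρ
    _ = a * M * μ {z | d y z < ρ} := (mul_assoc _ _ _).symm

theorem measure_ball_le_of_doubling_of_subset_ball (hκ : 0 < κ) (hμ : μ ≤ a • μ')
    (hsub : ∀ y ρ, {z | d y z < ρ} ⊆ {z | d' y z < κ * ρ})
    (hdbl : ∀ x, ∀ ρ > (0 : ℝ), μ {y | d x y < κ * ρ} ≤ M * μ {y | d x y < ρ})
    (y : X) (hρ : 0 < ρ) :
    μ {z | d y z < ρ} ≤ a * M * μ' {z | d' y z < ρ} :=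
  calc μ {z | d y z < ρ} = μ {z | d y z < κ * (κ⁻¹ * ρ)} := by
        rw [mul_inv_cancel_left₀ hκ.ne']
    _ ≤ M * μ {z | d y z < κ⁻¹ * ρ} := hdbl y _ (by positivity)
    _ ≤ M * (a * μ' {z | d y z < κ⁻¹ * ρ}) := by gcongr; exact hμ _
    _ ≤ M * (a * μ' {z | d' y z < ρ}) := by
        gcongr M * (a * ?_)
        simpa only [mul_inv_cancel_left₀ hκ.ne'] using measure_mono (hsub y (κ⁻¹ * ρ))
    _ = a * M * μ' {z | d' y z < ρ} := by ring

end

theorem ofReal_rpow_mul_sq_le {κ s M : ℝ} (hκ : 0 < κ) (hM : 1 ≤ M) :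
    (ENNReal.ofReal (κ ^ s) * (ENNReal.ofReal (κ ^ s) * ENNReal.ofReal M)) ^ 2 ≤
      ENNReal.ofReal (κ ^ (4 * s) * M ^ 3) := by
  rw [← ENNReal.ofReal_mul (by positivity), ← ENNReal.ofReal_mul (by positivity),
    ← ENNReal.ofReal_pow (by positivity)]
  apply ENNReal.ofReal_le_ofReal
  calc (κ ^ s * (κ ^ s * M)) ^ 2 = (κ ^ s) ^ 4 * M ^ 2 := by ring
    _ = κ ^ (4 * s) * M ^ 2 := by
      rw [← Real.rpow_natCast, ← Real.rpow_mul hκ.le, mul_comm s]; norm_num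
    _ ≤ κ ^ (4 * s) * M ^ 3 := by gcongr; norm_num

theorem statement16_general {X : Type*} [MeasurableSpace X] (μ μ' : Measure X)
    (d d' : X → X → ℝ) (s κ M Θ r t : ℝ)
    (hκ : 1 ≤ κ) (hM : 1 ≤ M) (hr : 0 < r)
    (ht : t ∈ Set.Ioc (0 : ℝ) 1)
    (hμ₁ : ∀ A : Set X, MeasurableSet A → ENNReal.ofReal (κ ^ (-s)) * μ A ≤ μ' A)
    (hμ₂ : ∀ A : Set X, MeasurableSet A → μ' A ≤ ENNReal.ofReal (κ ^ s) * μ A)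
    (hd₁ : ∀ x y : X, κ⁻¹ * d x y ≤ d' x y)
    (hd₂ : ∀ x y : X, d' x y ≤ κ * d x y)
    (hdbl : ∀ x : X, ∀ ρ > (0 : ℝ),
      μ {y | d x y < κ * ρ} ≤ ENNReal.ofReal M * μ {y | d x y < ρ})
    (x : X) (A At : Set X)
    (hMCP :
      (∫⁻ y in A, (μ {z | d y z < r}) ^ (-(1 : ℝ) / 2) ∂μ) /
          (μ {y | d x y < r}) ^ ((1 : ℝ) / 2) ≤
        ENNReal.ofReal Θ *
          ((∫⁻ y in At, (μ {z | d y z < r * t}) ^ (-(1 : ℝ) / 2) ∂μ) /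
            (μ {y | d x y < r * t}) ^ ((1 : ℝ) / 2))) :
    (∫⁻ y in A, (μ' {z | d' y z < r}) ^ (-(1 : ℝ) / 2) ∂μ') /
        (μ' {y | d' x y < r}) ^ ((1 : ℝ) / 2) ≤
      ENNReal.ofReal (Θ * κ ^ (4 * s) * M ^ 3) *
        ((∫⁻ y in At, (μ' {z | d' y z < r * t}) ^ (-(1 : ℝ) / 2) ∂μ') /
          (μ' {y | d' x y < r * t}) ^ ((1 : ℝ) / 2)) := by
  have hκ₀ : 0 < κ := by linarith
  set a := ENNReal.ofReal (κ ^ s)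
  have ha₀ : a ≠ 0 := (ENNReal.ofReal_pos.2 (Real.rpow_pos_of_pos hκ₀ s)).ne'
  have hμ'μ : μ' ≤ a • μ := Measure.le_iff.2 hμ₂
  have hμμ' : μ ≤ a • μ' := Measure.le_iff.2 fun B hB => by
    rw [Measure.smul_apply, smul_eq_mul, ← ENNReal.inv_mul_le_iff ha₀ ENNReal.ofReal_ne_top,
      ← ENNReal.ofReal_inv_of_pos (Real.rpow_pos_of_pos hκ₀ s), ← Real.rpow_neg hκ₀.le]
    exact hμ₁ B hB
  have hdd' : ∀ x y, d x y ≤ κ * d' x y := fun x y => by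
    rw [← inv_mul_le_iff₀ hκ₀]; exact hd₁ x y
  set C := a * ENNReal.ofReal M
  have hC₀ : C ≠ 0 := mul_ne_zero ha₀ (ENNReal.ofReal_pos.2 (by linarith)).ne'
  have hC : C ≠ ∞ := ENNReal.mul_ne_top ENNReal.ofReal_ne_top ENNReal.ofReal_ne_top
  have hratio_r := contractionRatio_le_of_le_smul hC₀ hC hμ'μ
    (fun y => measure_ball_le_of_doubling_of_subset_ball hκ₀ hμμ'
      (setOf_lt_subset_setOf_lt_mul hκ₀ hd₂) hdbl y hr) x A
  have hratio_rt := contractionRatio_le_of_le_smul hC₀ hC hμμ'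
    (fun y => measure_ball_le_of_doubling_of_ball_subset hμ'μ
      (setOf_lt_subset_setOf_lt_mul hκ₀ hdd') hdbl y (mul_pos hr ht.1)) x At
  calc _ ≤ a * C * (ENNReal.ofReal Θ * contractionRatio μ (fun y => {z | d y z < r * t}) x At) :=
        hratio_r.trans (by gcongr; exact hMCP)
    _ ≤ ENNReal.ofReal Θ * (a * C) ^ 2 *
        contractionRatio μ' (fun y => {z | d' y z < r * t}) x At := by
      grw [hratio_rt]; apply le_of_eq; ring
    _ ≤ ENNReal.ofReal Θ * ENNReal.ofReal (κ ^ (4 * s) * M ^ 3) *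
        contractionRatio μ' (fun y => {z | d' y z < r * t}) x At := by
      grw [ofReal_rpow_mul_sq_le hκ₀ hM]
    _ = _ := by rw [← ENNReal.ofReal_mul' (by positivity), ← mul_assoc]; rfl

/-- Transfer of the measure contraction inequality under (local) equivalence of
distances and measures: if `κ^{−s}μ ≤ μ' ≤ κ^{s}μ`, `κ⁻¹d ≤ d' ≤ κd`, `μ` is
doubling with constant `M` on `κ`-dilations, and the measure contraction inequality
`μ_r(A)/√(μ(B_r(x))) ≤ Θ·μ_{rt}(A_t)/√(μ(B_{rt}(x)))` holds for `(d,μ)`, then the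
corresponding inequality holds for `(d',μ')` with constant `Θκ^{4s}M³`. -/
theorem statement16 {X : Type*} [MeasurableSpace X] (μ μ' : Measure X)
    (d d' : X → X → ℝ) (s κ M Θ r t : ℝ)
    (hs : 0 < s) (hκ : 1 ≤ κ) (hM : 1 ≤ M) (hΘ : 0 < Θ) (hr : 0 < r)
    (ht : t ∈ Set.Ioc (0 : ℝ) 1)
    (hB : ∀ (x : X) (ρ : ℝ), MeasurableSet {y | d x y < ρ})
    (hB' : ∀ (x : X) (ρ : ℝ), MeasurableSet {y | d' x y < ρ})
    (hmeas : ∀ ρ : ℝ, Measurable fun x => μ {y | d x y < ρ})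
    (hmeas' : ∀ ρ : ℝ, Measurable fun x => μ' {y | d' x y < ρ})
    (hμ₁ : ∀ A : Set X, MeasurableSet A → ENNReal.ofReal (κ ^ (-s)) * μ A ≤ μ' A)
    (hμ₂ : ∀ A : Set X, MeasurableSet A → μ' A ≤ ENNReal.ofReal (κ ^ s) * μ A)
    (hd₁ : ∀ x y : X, κ⁻¹ * d x y ≤ d' x y)
    (hd₂ : ∀ x y : X, d' x y ≤ κ * d x y)
    (hdbl : ∀ x : X, ∀ ρ > (0 : ℝ),
      μ {y | d x y < κ * ρ} ≤ ENNReal.ofReal M * μ {y | d x y < ρ})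
    (x : X) (A At : Set X) (hA : MeasurableSet A) (hAt : MeasurableSet At)
    (hAB : A ⊆ {y | d x y < r})
    (hpos : ∀ ρ ∈ ({r, r * t} : Set ℝ),
      (0 < μ {y | d x y < ρ} ∧ μ {y | d x y < ρ} < ⊤) ∧
      (0 < μ' {y | d' x y < ρ} ∧ μ' {y | d' x y < ρ} < ⊤))
    (hMCP :
      (∫⁻ y in A, (μ {z | d y z < r}) ^ (-(1 : ℝ) / 2) ∂μ) /
          (μ {y | d x y < r}) ^ ((1 : ℝ) / 2) ≤
        ENNReal.ofReal Θ *
          ((∫⁻ y in At, (μ {z | d y z < r * t}) ^ (-(1 : ℝ) / 2) ∂μ) /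
            (μ {y | d x y < r * t}) ^ ((1 : ℝ) / 2))) :
    (∫⁻ y in A, (μ' {z | d' y z < r}) ^ (-(1 : ℝ) / 2) ∂μ') /
        (μ' {y | d' x y < r}) ^ ((1 : ℝ) / 2) ≤
      ENNReal.ofReal (Θ * κ ^ (4 * s) * M ^ 3) *
        ((∫⁻ y in At, (μ' {z | d' y z < r * t}) ^ (-(1 : ℝ) / 2) ∂μ') /
          (μ' {y | d' x y < r * t}) ^ ((1 : ℝ) / 2)) :=
  statement16_general μ μ' d d' s κ M Θ r t hκ hM hr ht hμ₁ hμ₂ hd₁ hd₂ hdbl x A At hMCP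
end
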